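/- arXiv:0705.0670 — 7 statements merged into one kernel-verified Lean document; each statement's English description precedes it below -/
import Mathlib

section
/- Let G be a group, Q a finite set with |Q| ≥ 2, and {X_n} an exhaustive sequence for G. The Besicovitch pseudodistance d_B on Q^G is a metric (i.e., d_B(c_1,c_2) > 0 whenever c_1 ≠ c_2) if and only if G is finite. -/
/-! On an infinite group the windows `X n` grow without bound, so two configurations that
differ at a single site are at distance `1 / |X n| → 0`. On a finite group the windows are
eventually the whole group, and `d_B(c₁, c₂)` is the proportion of sites where `c₁` and `c₂`
differ, which is positive as soon as they differ somewhere. -/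

open Filter

noncomputable def hamDist {G Q : Type*} (U : Set G) (c₁ c₂ : G → Q) : ℕ :=
  {x ∈ U | c₁ x ≠ c₂ x}.ncard

noncomputable def besDist {G Q : Type*} (X : ℕ → Finset G) (c₁ c₂ : G → Q) : ℝ :=
  limsup (fun n => (hamDist (X n : Set G) c₁ c₂ : ℝ) / (X n).card) atTop

def IsExhaustive {G : Type*} (X : ℕ → Finset G) : Prop :=
  (∀ n, X n ⊆ X (n + 1)) ∧ ∀ g : G, ∃ n, g ∈ X n

section hamDist

variable {G Q : Type*} {c₁ c₂ : G → Q}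

theorem hamDist_le_ncard_ne (U : Set G) (hfin : {x | c₁ x ≠ c₂ x}.Finite) :
    hamDist U c₁ c₂ ≤ {x | c₁ x ≠ c₂ x}.ncard :=
  Set.ncard_le_ncard (fun _ hx => hx.2) hfin

theorem hamDist_univ : hamDist (Set.univ : Set G) c₁ c₂ = {x | c₁ x ≠ c₂ x}.ncard := by
  rw [hamDist, Set.sep_univ]

theorem hamDist_univ_pos [Finite G] (hne : c₁ ≠ c₂) : 0 < hamDist (Set.univ : Set G) c₁ c₂ := by
  rw [hamDist_univ, Set.ncard_pos]
  exact Function.ne_iff.mp hne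

end hamDist

namespace IsExhaustive

variable {G : Type*} {X : ℕ → Finset G}

theorem monotone (hX : IsExhaustive X) : Monotone X :=
  monotone_nat_of_le_succ hX.1

theorem eventually_mem (hX : IsExhaustive X) (g : G) : ∀ᶠ n in atTop, g ∈ X n := by
  obtain ⟨N, hN⟩ := hX.2 g
  filter_upwards [eventually_ge_atTop N] with n hn using hX.monotone hn hN

theorem eventually_subset (hX : IsExhaustive X) (s : Finset G) : ∀ᶠ n in atTop, s ⊆ X n :=
  (eventually_all_finset s).2 fun g _ => hX.eventually_mem g

theorem eventually_eq_univ [Fintype G] (hX : IsExhaustive X) :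
    ∀ᶠ n in atTop, X n = Finset.univ := by
  filter_upwards [hX.eventually_subset Finset.univ] with n hn using Finset.univ_subset_iff.mp hn

theorem tendsto_card_atTop [Infinite G] (hX : IsExhaustive X) :
    Tendsto (fun n => (X n).card) atTop atTop := by
  refine tendsto_atTop.2 fun m => ?_
  obtain ⟨s, rfl⟩ := Infinite.exists_subset_card_eq G m
  filter_upwards [hX.eventually_subset s] with n hn using Finset.card_le_card hn

end IsExhaustive

section besDist

variable {G Q : Type*} {X : ℕ → Finset G} {c₁ c₂ : G → Q}

theorem besDist_eq_zero_of_finite_ne [Infinite G] (hX : IsExhaustive X)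
    (hfin : {x | c₁ x ≠ c₂ x}.Finite) : besDist X c₁ c₂ = 0 := by
  have hK : Tendsto (fun n => ({x | c₁ x ≠ c₂ x}.ncard : ℝ) / (X n).card) atTop (nhds 0) :=
    (tendsto_const_div_atTop_nhds_zero_nat _).comp hX.tendsto_card_atTop
  refine (tendsto_of_tendsto_of_tendsto_of_le_of_le tendsto_const_nhds hK
    (fun n => by positivity) fun n => ?_).limsup_eq
  gcongr
  exact hamDist_le_ncard_ne _ hfin

theorem besDist_update_eq_zero [Infinite G] [DecidableEq G] (hX : IsExhaustive X)
    (c : G → Q) (g : G) (b : Q) : besDist X c (Function.update c g b) = 0 := by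
  refine besDist_eq_zero_of_finite_ne hX ((Set.finite_singleton g).subset fun x hx => ?_)
  by_contra hxg
  exact hx (Function.update_of_ne hxg b c).symm

theorem besDist_eq_of_fintype [Fintype G] (hX : IsExhaustive X) :
    besDist X c₁ c₂ = hamDist (Set.univ : Set G) c₁ c₂ / Fintype.card G := by
  refine (tendsto_const_nhds.congr' ?_).limsup_eq
  filter_upwards [hX.eventually_eq_univ] with n hn
  rw [hn, Finset.coe_univ, Finset.card_univ]

end besDist

theorem besicovitch_dist_iff_finite_general {G Q : Type*} [Fintype Q]
    (hQ : 2 ≤ Fintype.card Q) (X : ℕ → Finset G) (hX : IsExhaustive X) :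
    (∀ c₁ c₂ : G → Q, c₁ ≠ c₂ → 0 < besDist X c₁ c₂) ↔ Finite G := by
  classical
  constructor
  · intro hpos
    by_contra hinf
    have : Infinite G := not_finite_iff_infinite.mp hinf
    have : Nontrivial Q := Fintype.one_lt_card_iff_nontrivial.mp hQ
    obtain ⟨a, b, hab⟩ := exists_pair_ne Q
    obtain ⟨g⟩ : Nonempty G := inferInstance
    have hne : (fun _ => a) ≠ Function.update (fun _ => a) g b :=
      fun h => hab (Function.update_eq_self_iff.mp h.symm).symm
    exact (hpos _ _ hne).ne' (besDist_update_eq_zero hX _ g b)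
  · intro _ c₁ c₂ hne
    cases nonempty_fintype G
    have : Nonempty G := let ⟨x, _⟩ := Function.ne_iff.mp hne; ⟨x⟩
    rw [besDist_eq_of_fintype hX]
    exact div_pos (mod_cast hamDist_univ_pos hne) (mod_cast Fintype.card_pos)

theorem besicovitch_dist_iff_finite {G Q : Type*} [Group G] [Fintype Q]
    (hQ : 2 ≤ Fintype.card Q) (X : ℕ → Finset G) (hX : IsExhaustive X) :
    (∀ c₁ c₂ : G → Q, c₁ ≠ c₂ → 0 < besDist X c₁ c₂) ↔ Finite G :=
  besicovitch_dist_iff_finite_general hQ X hX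
end

section
/- Let G = ℤ, Q = {0,1}, X_n = {-n,...,n} and X'_n = {-n,...,2^n}. Let c_1 be identically 0 and c_2(g) = 1 iff g < 0. Then d_{B,{X_n}}(c_1,c_2) = 1/2 while d_{B,{X'_n}}(c_1,c_2) = 0. Hence the equivalence classes of the Besicovitch pseudodistance depend on the choice of exhaustive sequence. -/
open Filter

open Topology

/-! On a window `[-n, m]` with `m ≥ -1` the two configurations differ exactly at the `n` negative
sites, so the density of disagreement is `n / (m + n + 1)`. For `m = n` this tends to `1/2`; for
`m = 2^n` the window is dominated by its positive part and the density tends to `0`. -/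

lemma hamDist_Icc_false_decide_neg (n : ℕ) {m : ℤ} (hm : -1 ≤ m) :
    hamDist (Finset.Icc (-(n : ℤ)) m : Set ℤ) (fun _ => false) (fun g => decide (g < 0)) = n := by
  have hdiff : {x ∈ (Finset.Icc (-(n : ℤ)) m : Set ℤ) | false ≠ decide (x < 0)}
      = (Finset.Icc (-(n : ℤ)) (-1) : Set ℤ) := by
    ext x
    simp only [Set.mem_ofPred_eq, Finset.coe_Icc, Set.mem_Icc, ne_eq, false_eq_decide_iff,
      not_not]
    omega
  rw [hamDist, hdiff, Set.ncard_coe_finset, Int.card_Icc]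
  omega

lemma card_Icc_neg_natCast (n : ℕ) {m : ℤ} (hm : -1 ≤ m) :
    ((Finset.Icc (-(n : ℤ)) m).card : ℝ) = m + n + 1 := by
  have h := Int.card_Icc_of_le (-(n : ℤ)) m (by omega)
  exact_mod_cast h.trans (by ring)

lemma besDist_Icc_false_decide_neg (m : ℕ → ℤ) (hm : ∀ n, -1 ≤ m n) :
    besDist (fun n => Finset.Icc (-(n : ℤ)) (m n)) (fun _ => false) (fun g => decide (g < 0))
      = limsup (fun n : ℕ => (n : ℝ) / (m n + n + 1)) atTop := by
  simp only [besDist, hamDist_Icc_false_decide_neg _ (hm _), card_Icc_neg_natCast _ (hm _)]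

lemma tendsto_natCast_div_two_mul_add_one :
    Tendsto (fun n : ℕ => (n : ℝ) / (n + n + 1)) atTop (𝓝 (1 / 2)) := by
  have h := (tendsto_natCast_div_add_atTop (1 / 2 : ℝ)).const_mul (1 / 2)
  rw [mul_one] at h
  refine h.congr fun n => ?_
  field_simp
  ring

lemma tendsto_natCast_div_two_pow_add_add_one :
    Tendsto (fun n : ℕ => (n : ℝ) / (2 ^ n + n + 1)) atTop (𝓝 0) := by
  have h := tendsto_pow_const_div_const_pow_of_one_lt 1 (one_lt_two (α := ℝ))
  simp only [pow_one] at h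
  refine tendsto_of_tendsto_of_tendsto_of_le_of_le tendsto_const_nhds h
    (fun n => by positivity) fun n => ?_
  gcongr
  linarith [(n.cast_nonneg : (0 : ℝ) ≤ n)]

/-- The equivalence classes of the Besicovitch pseudodistance depend on the
exhaustive sequence: with `X n = [-n, n]` and `X' n = [-n, 2^n]`, the all-zero
configuration and the indicator of the negatives have distance `1/2` resp. `0`. -/
theorem besicovitch_depends_on_sequence :
    let X : ℕ → Finset ℤ := fun n => Finset.Icc (-(n : ℤ)) n
    let X' : ℕ → Finset ℤ := fun n => Finset.Icc (-(n : ℤ)) (2 ^ n)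
    let c₁ : ℤ → Bool := fun _ => false
    let c₂ : ℤ → Bool := fun g => decide (g < 0)
    besDist X c₁ c₂ = 1 / 2 ∧ besDist X' c₁ c₂ = 0 := by
  intro X X' c₁ c₂
  constructor
  · rw [besDist_Icc_false_decide_neg (fun n => n) fun n => by omega]
    push_cast
    exact tendsto_natCast_div_two_mul_add_one.limsup_eq
  · rw [besDist_Icc_false_decide_neg (fun n => 2 ^ n) fun n => by linarith [pow_nonneg (zero_le_two (α := ℤ)) n]]
    push_cast
    exact tendsto_natCast_div_two_pow_add_add_one.limsup_eq
end

section
/- Let G be a finitely generated group of polynomial growth, and let S, S' be two finite sets of generators of G. For any two configurations c_1, c_2 ∈ Q^G, if d_{B,S}(c_1,c_2) = 0 then d_{B,S'}(c_1,c_2) = 0. That is, the equivalence classes of the Besicovitch pseudodistance with respect to balls are independent of the choice of generating set. -/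
open Filter

/-- The ball of radius `n` centered at the identity in the word metric of `S ∪ S⁻¹`. -/
def wordBall {G : Type*} [Group G] (S : Set G) (n : ℕ) : Set G :=
  {g | ∃ l : List G, (∀ x ∈ l, x ∈ S ∨ x⁻¹ ∈ S) ∧ l.length ≤ n ∧ l.prod = g}

/-- Besicovitch pseudodistance with respect to word-metric balls. -/
noncomputable def besDistBall {G Q : Type*} [Group G] (S : Set G) (c₁ c₂ : G → Q) : ℝ :=
  limsup (fun n => (hamDist (wordBall S n) c₁ c₂ : ℝ) / (wordBall S n).ncard) atTop

/-- Polynomial growth of degree `k` with respect to `S`. -/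
def PolyGrowth {G : Type*} [Group G] (S : Set G) (k : ℕ) : Prop :=
  ∃ α₁ α₂ : ℝ, 0 < α₁ ∧ 0 < α₂ ∧ ∀ᶠ n : ℕ in atTop,
    α₂ * (n : ℝ) ^ k ≤ ((wordBall S n).ncard : ℝ) ∧
    ((wordBall S n).ncard : ℝ) ≤ α₁ * (n : ℝ) ^ k

/-!
The word metrics of two finite generating sets are bi-Lipschitz equivalent:
`D'_n ⊆ D_{mn}` and `D_{mn} ⊆ D'_{m'mn}`. Polynomial growth of `S'` gives
`|D'_{m'mn}| ≤ C |D'_n|`, so the proportion of disagreements of `c₁, c₂` in `D'_n` is at most `C`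
times their proportion in `D_{mn}`, which tends to `0`.
-/

open Topology

section WordBall

variable {G : Type*} [Group G] {S T : Set G} {m n : ℕ}

lemma one_mem_wordBall (S : Set G) (n : ℕ) : (1 : G) ∈ wordBall S n :=
  ⟨[], by simp, by simp, rfl⟩

lemma mem_wordBall_one {s : G} (hs : s ∈ S) : s ∈ wordBall S 1 :=
  ⟨[s], by simp [hs], by simp, by simp⟩

lemma wordBall_mono (h : m ≤ n) : wordBall S m ⊆ wordBall S n :=
  fun _ ⟨l, hl, hlen, hprod⟩ => ⟨l, hl, hlen.trans h, hprod⟩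

lemma inv_mem_wordBall {a : G} (ha : a ∈ wordBall S n) : a⁻¹ ∈ wordBall S n := by
  obtain ⟨l, hl, hlen, rfl⟩ := ha
  refine ⟨(l.map (·⁻¹)).reverse, ?_, by simpa using hlen, (List.prod_inv_reverse l).symm⟩
  simp only [List.mem_reverse, List.mem_map, forall_exists_index, and_imp]
  rintro _ y hy rfl
  simpa [or_comm] using hl y hy

lemma mul_mem_wordBall {a b : G} (ha : a ∈ wordBall S m) (hb : b ∈ wordBall S n) :
    a * b ∈ wordBall S (m + n) := by
  obtain ⟨l, hl, hlen, rfl⟩ := ha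
  obtain ⟨l', hl', hlen', rfl⟩ := hb
  refine ⟨l ++ l', ?_, by simpa using Nat.add_le_add hlen hlen', by simp⟩
  simp only [List.mem_append]
  rintro x (hx | hx)
  exacts [hl x hx, hl' x hx]

lemma wordBall_finite (hS : S.Finite) (n : ℕ) : (wordBall S n).Finite := by
  have : Finite ↥(S ∪ S⁻¹) := (hS.union hS.inv).to_subtype
  refine ((List.finite_length_le ↥(S ∪ S⁻¹) n).image fun l => (l.map (↑)).prod).subset ?_
  rintro _ ⟨l, hl, hlen, rfl⟩
  lift l to List ↥(S ∪ S⁻¹) using hl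
  exact ⟨l, by simpa using hlen, rfl⟩

lemma exists_mem_wordBall_of_closure_eq_top (hS : Subgroup.closure S = ⊤) (g : G) :
    ∃ n, g ∈ wordBall S n := by
  have hg : g ∈ Subgroup.closure S := hS ▸ Subgroup.mem_top g
  induction hg using Subgroup.closure_induction with
  | mem s hs => exact ⟨1, mem_wordBall_one hs⟩
  | one => exact ⟨0, one_mem_wordBall S 0⟩
  | mul a b _ _ ha hb =>
    obtain ⟨p, hp⟩ := ha
    obtain ⟨q, hq⟩ := hb
    exact ⟨p + q, mul_mem_wordBall hp hq⟩
  | inv a _ ha =>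
    obtain ⟨p, hp⟩ := ha
    exact ⟨p, inv_mem_wordBall hp⟩

lemma wordBall_subset_wordBall_mul (hT : T ⊆ wordBall S m) :
    wordBall T n ⊆ wordBall S (m * n) := by
  rintro _ ⟨l, hl, hlen, rfl⟩
  refine wordBall_mono (Nat.mul_le_mul_left m hlen) ?_
  clear hlen
  induction l with
  | nil => exact one_mem_wordBall S _
  | cons a l ih =>
    have ha : a ∈ wordBall S m := by
      rcases hl a List.mem_cons_self with h | h
      exacts [hT h, inv_inv a ▸ inv_mem_wordBall (hT h)]
    rw [List.prod_cons, List.length_cons, Nat.mul_succ, Nat.add_comm]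
    exact mul_mem_wordBall ha (ih fun x hx => hl x (List.mem_cons_of_mem a hx))

lemma exists_wordBall_subset_wordBall_mul (hT : T.Finite) (hS : Subgroup.closure S = ⊤) :
    ∃ m, 0 < m ∧ ∀ n, wordBall T n ⊆ wordBall S (m * n) := by
  choose len hlen using exists_mem_wordBall_of_closure_eq_top hS
  refine ⟨hT.toFinset.sup len + 1, Nat.succ_pos _, fun n => wordBall_subset_wordBall_mul ?_⟩
  intro t ht
  exact wordBall_mono ((Finset.le_sup (hT.mem_toFinset.mpr ht)).trans (Nat.le_succ _)) (hlen t)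

end WordBall

lemma tendsto_nhds_zero_of_limsup_eq_zero {α : Type*} {l : Filter α} [l.NeBot] {f : α → ℝ}
    (hf : 0 ≤ f) (hbdd : IsBoundedUnder (· ≤ ·) l f) (h : limsup f l = 0) :
    Tendsto f l (𝓝 0) :=
  tendsto_of_le_liminf_of_limsup_le (le_liminf_of_le hbdd.isCoboundedUnder_ge (.of_forall hf))
    h.le hbdd (isBoundedUnder_of ⟨0, hf⟩)

section HammingDistance

variable {α Q : Type*} {U V : Set α} {c₁ c₂ : α → Q}

lemma hamDist_mono (hV : V.Finite) (hUV : U ⊆ V) : hamDist U c₁ c₂ ≤ hamDist V c₁ c₂ :=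
  Set.ncard_le_ncard (fun _ hx => ⟨hUV hx.1, hx.2⟩) (hV.subset (Set.sep_subset _ _))

lemma hamDist_le_ncard (hU : U.Finite) : hamDist U c₁ c₂ ≤ U.ncard :=
  Set.ncard_le_ncard (Set.sep_subset _ _) hU

lemma hamDist_div_ncard_le_mul (hV : V.Finite) (hUV : U ⊆ V) {C : ℝ}
    (hC : (V.ncard : ℝ) ≤ C * U.ncard) :
    (hamDist U c₁ c₂ : ℝ) / U.ncard ≤ C * ((hamDist V c₁ c₂ : ℝ) / V.ncard) := by
  rcases (Nat.cast_nonneg (α := ℝ) U.ncard).eq_or_lt with hU | hU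
  · have hV0 : (V.ncard : ℝ) = 0 :=
      le_antisymm (by simpa [← hU] using hC) (Nat.cast_nonneg _)
    simp [← hU, hV0]
  · have hVpos : (0 : ℝ) < V.ncard := hU.trans_le (by exact_mod_cast Set.ncard_le_ncard hUV hV)
    calc (hamDist U c₁ c₂ : ℝ) / U.ncard ≤ hamDist V c₁ c₂ / U.ncard := by
          gcongr; exact_mod_cast hamDist_mono hV hUV
      _ = V.ncard / U.ncard * (hamDist V c₁ c₂ / V.ncard) := by field_simp
      _ ≤ C * (hamDist V c₁ c₂ / V.ncard) := by
          gcongr; rwa [div_le_iff₀ hU]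

end HammingDistance

section Density

variable {G Q : Type*} [Group G] {S : Set G}

noncomputable def diffDensity (S : Set G) (c₁ c₂ : G → Q) (n : ℕ) : ℝ :=
  (hamDist (wordBall S n) c₁ c₂ : ℝ) / (wordBall S n).ncard

lemma diffDensity_nonneg (c₁ c₂ : G → Q) (n : ℕ) : 0 ≤ diffDensity S c₁ c₂ n := by
  unfold diffDensity; positivity

lemma diffDensity_le_one (hS : S.Finite) (c₁ c₂ : G → Q) (n : ℕ) :
    diffDensity S c₁ c₂ n ≤ 1 :=
  div_le_one_of_le₀ (by exact_mod_cast hamDist_le_ncard (wordBall_finite hS n)) (Nat.cast_nonneg _)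

lemma besDistBall_eq_zero_iff_tendsto (hS : S.Finite) (c₁ c₂ : G → Q) :
    besDistBall S c₁ c₂ = 0 ↔ Tendsto (diffDensity S c₁ c₂) atTop (𝓝 0) :=
  ⟨tendsto_nhds_zero_of_limsup_eq_zero (diffDensity_nonneg c₁ c₂)
    (isBoundedUnder_of ⟨1, diffDensity_le_one hS c₁ c₂⟩), Tendsto.limsup_eq⟩

end Density

lemma PolyGrowth.exists_eventually_ncard_wordBall_mul_le {G : Type*} [Group G] {S : Set G}
    {k : ℕ} (h : PolyGrowth S k) {m : ℕ} (hm : 0 < m) :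
    ∃ C : ℝ, ∀ᶠ n in atTop, ((wordBall S (m * n)).ncard : ℝ) ≤ C * (wordBall S n).ncard := by
  obtain ⟨α₁, α₂, hα₁, hα₂, hgrowth⟩ := h
  refine ⟨α₁ * m ^ k / α₂, ?_⟩
  filter_upwards [hgrowth, (tendsto_id.const_mul_atTop' hm).eventually hgrowth] with n hn hmn
  calc ((wordBall S (m * n)).ncard : ℝ) ≤ α₁ * ((m * n : ℕ) : ℝ) ^ k := hmn.2
    _ = α₁ * m ^ k / α₂ * (α₂ * n ^ k) := by push_cast; field_simp; ring
    _ ≤ α₁ * m ^ k / α₂ * (wordBall S n).ncard := by gcongr; exact hn.1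

theorem besicovitch_ball_classes_independent_of_generators_general
    {G Q : Type*} [Group G]
    (S S' : Set G) (hSfin : S.Finite) (hS'fin : S'.Finite)
    (hSgen : Subgroup.closure S = ⊤) (hS'gen : Subgroup.closure S' = ⊤)
    (hS'poly : ∃ k, PolyGrowth S' k)
    (c₁ c₂ : G → Q) (h : besDistBall S c₁ c₂ = 0) :
    besDistBall S' c₁ c₂ = 0 := by
  obtain ⟨k, hpoly⟩ := hS'poly
  obtain ⟨m, hm, hS'S⟩ := exists_wordBall_subset_wordBall_mul hS'fin hSgen
  obtain ⟨m', hm', hSS'⟩ := exists_wordBall_subset_wordBall_mul hSfin hS'gen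
  obtain ⟨C, hC⟩ := hpoly.exists_eventually_ncard_wordBall_mul_le (Nat.mul_pos hm' hm)
  have hlim : Tendsto (fun n => C * diffDensity S c₁ c₂ (m * n)) atTop (𝓝 0) := by
    simpa using (((besDistBall_eq_zero_iff_tendsto hSfin c₁ c₂).mp h).comp
      (tendsto_id.const_mul_atTop' hm)).const_mul C
  have hcomp : ∀ᶠ n in atTop, diffDensity S' c₁ c₂ n ≤ C * diffDensity S c₁ c₂ (m * n) := by
    filter_upwards [hC] with n hn
    refine hamDist_div_ncard_le_mul (wordBall_finite hSfin _) (hS'S n) ?_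
    calc ((wordBall S (m * n)).ncard : ℝ) ≤ (wordBall S' (m' * (m * n))).ncard := by
          exact_mod_cast Set.ncard_le_ncard (hSS' _) (wordBall_finite hS'fin _)
      _ ≤ C * (wordBall S' n).ncard := by rw [← mul_assoc]; exact hn
  exact (besDistBall_eq_zero_iff_tendsto hS'fin c₁ c₂).mpr
    (squeeze_zero' (.of_forall (diffDensity_nonneg c₁ c₂)) hcomp hlim)

theorem besicovitch_ball_classes_independent_of_generators
    {G Q : Type*} [Group G] [Fintype Q] (hQ : 2 ≤ Fintype.card Q)
    (S S' : Set G) (hSfin : S.Finite) (hS'fin : S'.Finite)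
    (hSgen : Subgroup.closure S = ⊤) (hS'gen : Subgroup.closure S' = ⊤)
    (hSpoly : ∃ k, PolyGrowth S k) (hS'poly : ∃ k, PolyGrowth S' k)
    (c₁ c₂ : G → Q) (h : besDistBall S c₁ c₂ = 0) :
    besDistBall S' c₁ c₂ = 0 :=
  besicovitch_ball_classes_independent_of_generators_general S S' hSfin hS'fin hSgen hS'gen hS'poly
    c₁ c₂ h
end

section
/- Let G be the free group on two generators a, b, identified with reduced words over {a,b,a^{-1},b^{-1}}, and S = {a,b}. Define c_1 ∈ {0,1}^G identically 0, and c_2(g) = 1 iff the reduced word g begins with a. Then d_{B,S}(c_1,c_2) = 1/4 and d_{B,S}(c_1^a, c_2^a) = 3/4, where c^g(h) = c(gh). Hence the Besicovitch pseudodistance with respect to word-metric balls is not translation invariant in general. -/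
/-!
In the free group on `r` letters let `h n` count the reduced words of length `≤ n` beginning
with a fixed letter `z`. Left multiplication by `z` maps the words of length `≤ n` not beginning
with `z⁻¹` bijectively onto the words of length `≤ n + 1` beginning with `z`. Hence `h` does not
depend on `z`, the ball of radius `n` has `1 + 2 r h n` elements and `h n ≥ n`, so the proportion
of the ball beginning with `z` tends to `1 / (2 r)`. For `c₁, c₂` the disagreement set is the
set of words beginning with `a` (proportion `→ 1/4`); after translating by `a` it is the set of
words not beginning with `a⁻¹` (proportion `→ 3/4`).
-/

open Filter

open Topology Function

namespace FreeGroup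

variable {α : Type*}

theorem mk_eq_prod_map (L : List (α × Bool)) :
    mk L = (L.map fun z => mk [z]).prod := by
  induction L with
  | nil => rfl
  | cons z L ih => rw [List.map_cons, List.prod_cons, ← ih, mul_mk]; rfl

theorem mk_singleton_inv (z : α × Bool) : (mk [z])⁻¹ = mk [(z.1, !z.2)] := by
  rw [inv_mk]; rfl

theorem isReduced_cons_iff {z : α × Bool} {w : List (α × Bool)} :
    IsReduced (z :: w) ↔ w[0]? ≠ some (z.1, !z.2) ∧ IsReduced w := by
  cases w with
  | nil => simp
  | cons y w =>
    obtain ⟨a, b⟩ := z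
    obtain ⟨c, d⟩ := y
    simp only [isReduced_cons_cons, List.getElem?_cons_zero, ne_eq, Option.some.injEq,
      Prod.mk.injEq]
    cases b <;> cases d <;> simp [eq_comm]

variable [DecidableEq α]

theorem norm_list_prod_le (l : List (FreeGroup α)) : l.prod.norm ≤ (l.map norm).sum := by
  induction l with
  | nil => simp
  | cons x l ih =>
    grw [List.prod_cons, norm_mul_le, ih, List.map_cons, List.sum_cons]

def normBall (n : ℕ) : Set (FreeGroup α) := {g | g.norm ≤ n}

theorem wordBall_range_of (n : ℕ) :
    wordBall (Set.range (of : α → FreeGroup α)) n = normBall n := by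
  ext g
  constructor
  · rintro ⟨l, hl, hlen, rfl⟩
    have hnorm : ∀ x ∈ l, x.norm = 1 := by
      intro x hx
      rcases hl x hx with ⟨a, rfl⟩ | ⟨a, ha⟩
      · exact norm_of a
      · rw [← norm_inv_eq, ← ha, norm_of]
    grw [normBall, Set.mem_ofPred_eq, norm_list_prod_le, List.map_congr_left hnorm]
    simpa using hlen
  · intro hg
    refine ⟨g.toWord.map fun z => mk [z], ?_, (List.length_map _).trans_le hg, ?_⟩
    · simp only [List.mem_map]
      rintro _ ⟨⟨a, b⟩, -, rfl⟩
      cases b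
      · exact .inr ⟨a, by rw [mk_singleton_inv]; rfl⟩
      · exact .inl ⟨a, rfl⟩
    · rw [← mk_eq_prod_map, mk_toWord]

theorem finite_normBall [Finite α] (n : ℕ) : (normBall n : Set (FreeGroup α)).Finite :=
  (List.finite_length_le _ n).preimage toWord_injective.injOn

theorem exists_toWord_eq_cons_of_mem_startsWith {z : α × Bool} {g : FreeGroup α}
    (hg : g ∈ startsWith z) : ∃ w, g.toWord = z :: w :=
  ⟨_, List.eq_cons_of_mem_head? (by rwa [List.head?_eq_getElem?])⟩

theorem toWord_mk_singleton_mul {z : α × Bool} {g : FreeGroup α}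
    (hg : g ∉ startsWith (z.1, !z.2)) : (mk [z] * g).toWord = z :: g.toWord := by
  rw [← mk_toWord (x := g), mul_mk, toWord_mk, mk_toWord]
  exact (isReduced_cons_iff.2 ⟨hg, isReduced_toWord⟩).reduce_eq

theorem toWord_mk_singleton_inv_mul {z : α × Bool} {g : FreeGroup α} {w : List (α × Bool)}
    (hg : g.toWord = z :: w) : ((mk [z])⁻¹ * g).toWord = w ∧ w[0]? ≠ some (z.1, !z.2) := by
  have hred := isReduced_cons_iff.1 (hg ▸ isReduced_toWord (x := g))
  rw [← mk_toWord (x := g), hg, show z :: w = [z] ++ w from rfl, ← mul_mk, inv_mul_cancel_left,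
    toWord_mk]
  exact ⟨hred.2.reduce_eq, hred.1⟩

theorem mk_singleton_mul_mem_startsWith_iff {z : α × Bool} {g : FreeGroup α} :
    mk [z] * g ∈ startsWith z ↔ g ∉ startsWith (z.1, !z.2) := by
  refine ⟨fun h hg => ?_, startsWith_mk_mul g⟩
  obtain ⟨w, hw⟩ := exists_toWord_eq_cons_of_mem_startsWith hg
  obtain ⟨h₁, h₂⟩ := toWord_mk_singleton_inv_mul hw
  rw [mk_singleton_inv, Bool.not_not] at h₁
  simp_all [startsWith]

theorem normBall_succ_inter_startsWith (z : α × Bool) (n : ℕ) :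
    normBall (n + 1) ∩ startsWith z =
      (mk [z] * ·) '' (normBall n \ startsWith (z.1, !z.2)) := by
  ext g
  constructor
  · rintro ⟨hn, hz⟩
    obtain ⟨w, hw⟩ := exists_toWord_eq_cons_of_mem_startsWith hz
    obtain ⟨h₁, h₂⟩ := toWord_mk_singleton_inv_mul hw
    refine ⟨(mk [z])⁻¹ * g, ⟨?_, ?_⟩, mul_inv_cancel_left _ _⟩
    · simp only [normBall, Set.mem_ofPred_eq, norm, h₁, hw, List.length_cons] at hn ⊢
      omega
    · simpa only [startsWith, Set.mem_ofPred_eq, h₁] using h₂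
  · rintro ⟨g, ⟨hn, hz⟩, rfl⟩
    refine ⟨?_, startsWith_mk_mul g hz⟩
    simpa [normBall, norm, toWord_mk_singleton_mul hz] using hn

theorem ncard_normBall_succ_inter_startsWith_add [Finite α] (z : α × Bool) (n : ℕ) :
    (normBall (n + 1) ∩ startsWith z).ncard + (normBall n ∩ startsWith (z.1, !z.2)).ncard =
      (normBall n : Set (FreeGroup α)).ncard := by
  rw [normBall_succ_inter_startsWith, Set.ncard_image_of_injective _ (mul_right_injective _),
    add_comm, Set.ncard_inter_add_ncard_sdiff_eq_ncard _ _ (finite_normBall n)]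

theorem normBall_eq_insert_iUnion (n : ℕ) :
    normBall n = insert 1 (⋃ z, normBall n ∩ startsWith z : Set (FreeGroup α)) := by
  ext g
  rcases eq_or_ne g 1 with rfl | hg
  · simp [normBall]
  · obtain ⟨z, w, hw⟩ := List.exists_cons_of_ne_nil (mt toWord_eq_nil_iff.1 hg)
    simp [hg, startsWith, hw]

theorem ncard_normBall [Fintype α] (n : ℕ) :
    (normBall n : Set (FreeGroup α)).ncard =
      1 + ∑ z : α × Bool, (normBall n ∩ startsWith z).ncard := by
  have hfin (z : α × Bool) := (finite_normBall (α := α) n).inter_of_left (startsWith z)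
  have hdisj : Pairwise (Disjoint on fun z : α × Bool => normBall n ∩ startsWith z) :=
    fun z y hzy => (startsWith.disjoint_iff_ne.2 hzy).mono Set.inter_subset_right
      Set.inter_subset_right
  nth_rw 1 [normBall_eq_insert_iUnion]
  rw [Set.ncard_insert_of_notMem (by simp [startsWith]) (Set.finite_iUnion hfin),
    Set.ncard_iUnion_of_finite hfin hdisj, finsum_eq_sum_of_fintype, add_comm]

theorem normBall_zero_inter_startsWith (z : α × Bool) :
    normBall 0 ∩ startsWith z = ∅ := by
  ext g
  simp [normBall, startsWith, norm]

theorem ncard_normBall_inter_startsWith_eq [Finite α] (z y : α × Bool) (n : ℕ) :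
    (normBall n ∩ startsWith z).ncard = (normBall n ∩ startsWith y).ncard := by
  induction n generalizing z y with
  | zero => simp [normBall_zero_inter_startsWith]
  | succ n ih =>
    have hz := ncard_normBall_succ_inter_startsWith_add z n
    have hy := ncard_normBall_succ_inter_startsWith_add y n
    rw [ih (z.1, !z.2) (y.1, !y.2)] at hz
    omega

theorem ncard_normBall_eq [Fintype α] (z : α × Bool) (n : ℕ) :
    (normBall n : Set (FreeGroup α)).ncard =
      1 + 2 * Fintype.card α * (normBall n ∩ startsWith z).ncard := by
  rw [ncard_normBall, Finset.sum_congr rfl fun y _ => ncard_normBall_inter_startsWith_eq y z n,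
    Finset.sum_const, Finset.card_univ, Fintype.card_prod, Fintype.card_bool, smul_eq_mul,
    mul_comm (Fintype.card α)]

theorem le_ncard_normBall_inter_startsWith [Fintype α] (z : α × Bool) (n : ℕ) :
    n ≤ (normBall n ∩ startsWith z).ncard := by
  have hα : 0 < Fintype.card α := Fintype.card_pos_iff.2 ⟨z.1⟩
  induction n with
  | zero => exact Nat.zero_le _
  | succ n ih =>
    have h := ncard_normBall_succ_inter_startsWith_add z n
    rw [ncard_normBall_inter_startsWith_eq (z.1, !z.2) z, ncard_normBall_eq z] at h
    nlinarith

theorem tendsto_ncard_normBall_inter_startsWith_div [Fintype α] (z : α × Bool) :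
    Tendsto (fun n => ((normBall n ∩ startsWith z).ncard : ℝ) /
      (normBall n : Set (FreeGroup α)).ncard) atTop (𝓝 (1 / (2 * Fintype.card α))) := by
  have hα : 0 < Fintype.card α := Fintype.card_pos_iff.2 ⟨z.1⟩
  have hball (n : ℕ) : ((normBall n : Set (FreeGroup α)).ncard : ℝ) =
      1 + 2 * Fintype.card α * (normBall n ∩ startsWith z).ncard := by
    exact_mod_cast ncard_normBall_eq z n
  have hB : Tendsto (fun n => ((normBall n : Set (FreeGroup α)).ncard : ℝ)) atTop atTop := by
    refine tendsto_atTop_mono (fun n => Nat.cast_le.2 ?_) tendsto_natCast_atTop_atTop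
    have := le_ncard_normBall_inter_startsWith z n
    rw [ncard_normBall_eq z]
    nlinarith
  have hα' : (Fintype.card α : ℝ) ≠ 0 := Nat.cast_ne_zero.2 hα.ne'
  have hratio (n : ℕ) :
      ((normBall n ∩ startsWith z).ncard : ℝ) / (normBall n : Set (FreeGroup α)).ncard =
        (1 - ((normBall n : Set (FreeGroup α)).ncard : ℝ)⁻¹) / (2 * Fintype.card α) := by
    rw [hball]
    field_simp
    ring
  have h := (tendsto_const_nhds (x := (1 : ℝ)).sub hB.inv_tendsto_atTop).div_const
    (2 * (Fintype.card α : ℝ))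
  rw [sub_zero] at h
  exact h.congr fun n => (hratio n).symm

theorem tendsto_ncard_normBall_diff_startsWith_div [Fintype α] (z : α × Bool) :
    Tendsto (fun n => ((normBall n \ startsWith z).ncard : ℝ) /
      (normBall n : Set (FreeGroup α)).ncard) atTop (𝓝 (1 - 1 / (2 * Fintype.card α))) := by
  refine ((tendsto_ncard_normBall_inter_startsWith_div z).const_sub 1).congr fun n => ?_
  have hpos : (0 : ℝ) < (normBall n : Set (FreeGroup α)).ncard := by
    exact_mod_cast (Set.ncard_pos (finite_normBall n)).2 ⟨1, by simp [normBall]⟩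
  rw [← Set.ncard_inter_add_ncard_sdiff_eq_ncard _ (startsWith z) (finite_normBall n)] at hpos ⊢
  push_cast at hpos ⊢
  field_simp
  ring

end FreeGroup

open FreeGroup in
/-- On the free group on two generators `a, b`, the Besicovitch pseudodistance with
respect to word-metric balls is not translation invariant: with `c₁ ≡ 0` and `c₂` the
indicator of reduced words beginning with `a`, we get `d_B(c₁,c₂) = 1/4` while
`d_B(c₁ᵃ, c₂ᵃ) = 3/4`. -/
theorem besicovitch_ball_not_translation_invariant :
    let G := FreeGroup (Fin 2)
    let a : G := FreeGroup.of 0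
    let b : G := FreeGroup.of 1
    let S : Set G := {a, b}
    let c₁ : G → Bool := fun _ => false
    let c₂ : G → Bool := fun g => decide (g.toWord.head? = some (0, true))
    besDistBall S c₁ c₂ = 1 / 4 ∧
    besDistBall S (fun h => c₁ (a * h)) (fun h => c₂ (a * h)) = 3 / 4 := by
  intro G a b S c₁ c₂
  have hS : S = Set.range of := by
    ext g; simp [S, a, b, Fin.exists_fin_two, eq_comm]
  have hball (n : ℕ) : wordBall S n = normBall n := hS ▸ wordBall_range_of n
  have ham₁ (n : ℕ) :
      {g ∈ wordBall S n | c₁ g ≠ c₂ g} = normBall n ∩ startsWith (0, true) := by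
    ext g
    simp only [Set.mem_ofPred_eq, Set.mem_inter_iff, hball, c₁, c₂, ne_eq, false_eq_decide_iff,
      Decidable.not_not, List.head?_eq_getElem?]
    rfl
  have ham₂ (n : ℕ) : {g ∈ wordBall S n | c₁ (a * g) ≠ c₂ (a * g)} =
      normBall n \ startsWith (0, false) := by
    ext g
    simp only [Set.mem_ofPred_eq, Set.mem_sdiff, hball, c₁, c₂, ne_eq, false_eq_decide_iff,
      Decidable.not_not, List.head?_eq_getElem?]
    -- `of 0` is `mk [(0, true)]` by definition
    exact and_congr_right fun _ => mk_singleton_mul_mem_startsWith_iff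
  constructor
  · rw [besDistBall, show (1 / 4 : ℝ) = 1 / (2 * Fintype.card (Fin 2)) by norm_num]
    simp_rw [hamDist, ham₁, hball]
    exact (tendsto_ncard_normBall_inter_startsWith_div ((0 : Fin 2), true)).limsup_eq
  · rw [besDistBall, show (3 / 4 : ℝ) = 1 - 1 / (2 * Fintype.card (Fin 2)) by norm_num]
    simp_rw [hamDist, ham₂, hball]
    exact (tendsto_ncard_normBall_diff_startsWith_div ((0 : Fin 2), false)).limsup_eq
end

section
/- If {X_n} is an amenable (Følner) exhaustive sequence for G consisting of symmetric sets (X_n = X_n^{-1}), then the Besicovitch pseudodistance d_{B,{X_n}} on Q^G is invariant under translations c ↦ c^g for every g ∈ G. -/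
/-!
Left translation by `g` turns the Hamming count of `c^g` on `X n` into the Hamming count of `c`
on `g X n`, which differs from the count on `X n` by at most `|g X n \ X n|`. Since inversion
maps `g X n \ X n` onto `X n g⁻¹ \ X n` when `X n` is symmetric, the Følner condition for
`E = {g}` makes this error negligible relative to `|X n|`, so the two limsups coincide.
-/

open Filter Pointwise

def IsFolner {G : Type*} [Group G] [DecidableEq G] (X : ℕ → Finset G) : Prop :=
  IsExhaustive X ∧ ∀ E : Finset G,
    Tendsto (fun n => (((X n * E⁻¹) \ X n).card : ℝ) / (X n).card) atTop (nhds 0)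

lemma limsup_le_limsup_of_le_add {a b e : ℕ → ℝ} (ha : ∀ n, 0 ≤ a n)
    (hb₀ : ∀ n, 0 ≤ b n) (hb₁ : ∀ n, b n ≤ 1)
    (hab : ∀ n, a n ≤ b n + e n) (he : Tendsto e atTop (nhds 0)) :
    limsup a atTop ≤ limsup b atTop := by
  have hbe : IsBoundedUnder (· ≤ ·) atTop (fun n => b n + e n) := by
    obtain ⟨M, hM⟩ := he.isBoundedUnder_le
    refine ⟨1 + M, ?_⟩
    rw [eventually_map] at hM ⊢
    filter_upwards [hM] with n hn using add_le_add (hb₁ n) hn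
  calc limsup a atTop ≤ limsup (fun n => b n + e n) atTop :=
        limsup_le_limsup (.of_forall hab) (isBoundedUnder_of ⟨0, ha⟩).isCoboundedUnder_le hbe
    _ ≤ limsup b atTop + limsup e atTop :=
        limsup_add_le (isBoundedUnder_of ⟨0, hb₀⟩) (isBoundedUnder_of ⟨1, hb₁⟩)
          he.isBoundedUnder_ge.isCoboundedUnder_le he.isBoundedUnder_le
    _ = limsup b atTop := by rw [he.limsup_eq, add_zero]

lemma limsup_eq_of_abs_sub_le {a b e : ℕ → ℝ} (ha₀ : ∀ n, 0 ≤ a n) (ha₁ : ∀ n, a n ≤ 1)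
    (hb₀ : ∀ n, 0 ≤ b n) (hb₁ : ∀ n, b n ≤ 1)
    (hab : ∀ n, |a n - b n| ≤ e n) (he : Tendsto e atTop (nhds 0)) :
    limsup a atTop = limsup b atTop :=
  le_antisymm
    (limsup_le_limsup_of_le_add ha₀ hb₀ hb₁
      (fun n => by linarith [(abs_sub_le_iff.1 (hab n)).1]) he)
    (limsup_le_limsup_of_le_add hb₀ ha₀ ha₁
      (fun n => by linarith [(abs_sub_le_iff.1 (hab n)).2]) he)

lemma abs_div_sub_div_le {p q r : ℕ} (hpq : p ≤ q + r) (hqp : q ≤ p + r) (c : ℝ) (hc : 0 ≤ c) :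
    |(p : ℝ) / c - q / c| ≤ r / c := by
  rw [← sub_div, abs_div, abs_of_nonneg hc]
  refine div_le_div_of_nonneg_right (abs_sub_le_iff.2 ⟨?_, ?_⟩) hc <;>
    · rw [sub_le_iff_le_add']
      exact_mod_cast ‹_›

section Hamming

variable {G Q : Type*}

lemma hamDist_coe_finset (s : Finset G) (c₁ c₂ : G → Q) [DecidablePred fun x => c₁ x ≠ c₂ x] :
    hamDist (s : Set G) c₁ c₂ = (s.filter fun x => c₁ x ≠ c₂ x).card := by
  rw [hamDist, ← Set.ncard_coe_finset, Finset.coe_filter]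
  rfl

lemma hamDist_le_card (s : Finset G) (c₁ c₂ : G → Q) : hamDist (s : Set G) c₁ c₂ ≤ s.card := by
  classical
  rw [hamDist_coe_finset]
  exact Finset.card_filter_le _ _

lemma hamDist_le_hamDist_add_card_sdiff [DecidableEq G] (s t : Finset G) (c₁ c₂ : G → Q) :
    hamDist (t : Set G) c₁ c₂ ≤ hamDist (s : Set G) c₁ c₂ + (t \ s).card := by
  classical
  rw [hamDist_coe_finset, hamDist_coe_finset]
  refine (Finset.card_le_card fun x hx => ?_).trans (Finset.card_union_le _ _)
  simp only [Finset.mem_filter, Finset.mem_union, Finset.mem_sdiff] at hx ⊢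
  by_cases hxs : x ∈ s
  · exact Or.inl ⟨hxs, hx.2⟩
  · exact Or.inr ⟨hx.1, hxs⟩

lemma hamDist_comp_mul_left [Group G] (U : Set G) (g : G) (c₁ c₂ : G → Q) :
    hamDist U (fun h => c₁ (g * h)) (fun h => c₂ (g * h)) = hamDist (g • U) c₁ c₂ := by
  have himage : (g * ·) '' {x ∈ U | c₁ (g * x) ≠ c₂ (g * x)} = {y ∈ g • U | c₁ y ≠ c₂ y} := by
    ext y
    simp only [Set.mem_image, Set.mem_ofPred_eq, Set.mem_smul_set, smul_eq_mul]
    constructor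
    · rintro ⟨x, ⟨hx, hne⟩, rfl⟩
      exact ⟨⟨x, hx, rfl⟩, hne⟩
    · rintro ⟨⟨x, hx, rfl⟩, hne⟩
      exact ⟨x, ⟨hx, hne⟩, rfl⟩
  rw [hamDist, hamDist, ← himage, Set.ncard_image_of_injective _ (mul_right_injective g)]

lemma card_mul_inv_singleton_sdiff_of_symmetric [Group G] [DecidableEq G] {s : Finset G}
    (hs : s = s⁻¹) (g : G) : ((s * ({g} : Finset G)⁻¹) \ s).card = (g • s \ s).card := by
  have hmem : ∀ x, x⁻¹ ∈ s ↔ x ∈ s := fun x => by rw [← Finset.mem_inv', ← hs]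
  rw [← Finset.card_inv (g • s \ s)]
  congr 1
  ext x
  simp only [Finset.mem_sdiff, Finset.mem_inv', Finset.inv_singleton, Finset.mem_mul,
    Finset.mem_singleton, Finset.mem_smul_finset, smul_eq_mul, hmem]
  constructor
  · rintro ⟨⟨y, hy, _, rfl, rfl⟩, hx⟩
    exact ⟨⟨y⁻¹, by rwa [hmem], by group⟩, hx⟩
  · rintro ⟨⟨y, hy, hyx⟩, hx⟩
    exact ⟨⟨y⁻¹, by rwa [hmem], g⁻¹, rfl, by rw [← mul_inv_rev, hyx, inv_inv]⟩, hx⟩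

noncomputable def hamRatio (X : ℕ → Finset G) (c₁ c₂ : G → Q) (n : ℕ) : ℝ :=
  (hamDist (X n : Set G) c₁ c₂ : ℝ) / (X n).card

lemma besDist_eq_limsup_hamRatio (X : ℕ → Finset G) (c₁ c₂ : G → Q) :
    besDist X c₁ c₂ = limsup (hamRatio X c₁ c₂) atTop :=
  rfl

lemma hamRatio_nonneg (X : ℕ → Finset G) (c₁ c₂ : G → Q) (n : ℕ) : 0 ≤ hamRatio X c₁ c₂ n := by
  unfold hamRatio
  positivity

lemma hamRatio_le_one (X : ℕ → Finset G) (c₁ c₂ : G → Q) (n : ℕ) : hamRatio X c₁ c₂ n ≤ 1 :=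
  div_le_one_of_le₀ (by exact_mod_cast hamDist_le_card _ c₁ c₂) (Nat.cast_nonneg _)

lemma abs_hamRatio_comp_mul_left_sub_le [Group G] [DecidableEq G] {X : ℕ → Finset G}
    (hsym : ∀ n, X n = (X n)⁻¹) (g : G) (c₁ c₂ : G → Q) (n : ℕ) :
    |hamRatio X (fun h => c₁ (g * h)) (fun h => c₂ (g * h)) n - hamRatio X c₁ c₂ n| ≤
      (((X n * ({g} : Finset G)⁻¹) \ X n).card : ℝ) / (X n).card := by
  have hcard : (g • X n).card = (X n).card := Finset.card_smul_finset g (X n)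
  have htrans := hamDist_comp_mul_left (X n : Set G) g c₁ c₂
  rw [← Finset.coe_smul_finset] at htrans
  rw [card_mul_inv_singleton_sdiff_of_symmetric (hsym n)]
  refine abs_div_sub_div_le ?_ ?_ _ (Nat.cast_nonneg _)
  · rw [htrans]
    exact hamDist_le_hamDist_add_card_sdiff _ _ c₁ c₂
  · rw [htrans, Finset.card_sdiff_comm hcard]
    exact hamDist_le_hamDist_add_card_sdiff _ _ c₁ c₂

end Hamming

theorem besicovitch_translation_invariant_of_symmetric_folner_general
    {G Q : Type*} [Group G] [DecidableEq G]
    (X : ℕ → Finset G) (hX : IsFolner X) (hsym : ∀ n, X n = (X n)⁻¹) :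
    ∀ (g : G) (c₁ c₂ : G → Q),
      besDist X (fun h => c₁ (g * h)) (fun h => c₂ (g * h)) = besDist X c₁ c₂ := by
  intro g c₁ c₂
  rw [besDist_eq_limsup_hamRatio, besDist_eq_limsup_hamRatio]
  exact limsup_eq_of_abs_sub_le (hamRatio_nonneg X _ _) (hamRatio_le_one X _ _)
    (hamRatio_nonneg X c₁ c₂) (hamRatio_le_one X c₁ c₂)
    (abs_hamRatio_comp_mul_left_sub_le hsym g c₁ c₂) (hX.2 {g})

/-- If an amenable exhaustive sequence consists of symmetric sets, then the
Besicovitch pseudodistance is translation invariant. -/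
theorem besicovitch_translation_invariant_of_symmetric_folner
    {G Q : Type*} [Group G] [DecidableEq G] [Fintype Q] (hQ : 2 ≤ Fintype.card Q)
    (X : ℕ → Finset G) (hX : IsFolner X) (hsym : ∀ n, X n = (X n)⁻¹) :
    ∀ (g : G) (c₁ c₂ : G → Q),
      besDist X (fun h => c₁ (g * h)) (fun h => c₂ (g * h)) = besDist X c₁ c₂ :=
  besicovitch_translation_invariant_of_symmetric_folner_general X hX hsym
end

section
/- Let {X_n} be an amenable exhaustive sequence for a group G, and let N ⊆ G be a (U,W)-net with U, W finite and nonempty. Then the lower density of N with respect to {X_n} is at least 1/|W|, and the upper density of N with respect to {X_n} is at most 1/|U|. That is, liminf_n |N ∩ X_n|/|X_n| ≥ 1/|W| and limsup_n |N ∩ X_n|/|X_n| ≤ 1/|U|. -/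
open Filter Pointwise

def IsNet {G : Type*} [Group G] (U W N : Set G) : Prop :=
  (∀ x ∈ N, ∀ y ∈ N, x ≠ y → Disjoint (x • U) (y • U)) ∧ N * W = Set.univ

open Finset Topology

/-!
The translates `x • U`, `x ∈ N ∩ X`, are pairwise disjoint and lie in `X * U`, while the
translates `x • W`, `x ∈ N ∩ X * W⁻¹`, cover `X`. Hence
`|N ∩ X| |U| ≤ |X| + |X U \ X|` and `|X| ≤ (|N ∩ X| + |X W⁻¹ \ X|) |W|`, and along a Følner
sequence both boundary terms are negligible compared to `|X|`.
-/

theorem Finset.card_filter_le_card_filter_add_card_sdiff {α : Type*} [DecidableEq α]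
    (s t : Finset α) (p : α → Prop) [DecidablePred p] :
    #{x ∈ s | p x} ≤ #{x ∈ t | p x} + #(s \ t) :=
  (card_le_card fun x hx => by grind).trans (card_union_le _ _)

theorem IsExhaustive.eventually_mem_s15 {G : Type*} {X : ℕ → Finset G} (hX : IsExhaustive X)
    (g : G) : ∀ᶠ n in atTop, g ∈ X n := by
  obtain ⟨n₀, hn₀⟩ := hX.2 g
  exact eventually_atTop.2 ⟨n₀, fun n hn => monotone_nat_of_le_succ hX.1 hn hn₀⟩

section LiminfLimsup

variable {α β : Type*} [ConditionallyCompleteLinearOrder α] [TopologicalSpace α]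
  [OrderTopology α] {f : Filter β} [f.NeBot] {u v : β → α} {c : α}

theorem le_liminf_of_eventually_le_of_tendsto (hv : Tendsto v f (𝓝 c))
    (hvu : ∀ᶠ n in f, v n ≤ u n) (hu : IsBoundedUnder (· ≤ ·) f u) : c ≤ liminf u f :=
  hv.liminf_eq ▸ liminf_le_liminf hvu hv.isBoundedUnder_ge hu.isCoboundedUnder_ge

theorem limsup_le_of_eventually_le_of_tendsto (hv : Tendsto v f (𝓝 c))
    (huv : ∀ᶠ n in f, u n ≤ v n) (hu : IsBoundedUnder (· ≥ ·) f u) : limsup u f ≤ c :=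
  hv.limsup_eq ▸ limsup_le_limsup huv hu.isCoboundedUnder_le hv.isBoundedUnder_le

end LiminfLimsup

namespace IsNet

variable {G : Type*} [Group G] {N : Set G}

theorem injOn_mul {U W : Set G} (hN : IsNet U W N) :
    (N ×ˢ U).InjOn fun p : G × G => p.1 * p.2 := by
  rintro ⟨x, u⟩ ⟨hx, hu⟩ ⟨y, v⟩ ⟨hy, hv⟩ (h : x * u = y * v)
  obtain rfl : x = y := by
    by_contra hxy
    refine Set.disjoint_left.1 (hN.1 x hx y hy hxy) (Set.smul_mem_smul_set hu) ?_
    simpa [h] using Set.smul_mem_smul_set (a := y) hv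
  simp_all

variable [DecidableEq G] [DecidablePred (· ∈ N)] {U W : Finset G}

theorem card_filter_mul_card_le (hN : IsNet (U : Set G) W N) (X : Finset G) :
    #{x ∈ X | x ∈ N} * #U ≤ #X + #((X * U) \ X) := calc
  #{x ∈ X | x ∈ N} * #U = #({x ∈ X | x ∈ N} * U) :=
    (card_mul_iff.2 <| hN.injOn_mul.mono <|
      Set.prod_mono (fun x hx => (mem_filter.1 hx).2) subset_rfl).symm
  _ ≤ #(X * U) := card_le_card (mul_subset_mul_right (filter_subset (· ∈ N) X))
  _ ≤ #X + #((X * U) \ X) := by rw [add_comm]; exact card_le_card_sdiff_add_card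

theorem card_le_card_filter_add_mul_card (hN : IsNet U (W : Set G) N) (X : Finset G) :
    #X ≤ (#{x ∈ X | x ∈ N} + #((X * W⁻¹) \ X)) * #W := calc
  #X ≤ #({x ∈ X * W⁻¹ | x ∈ N} * W) := card_le_card fun g hg => by
    obtain ⟨x, hx, w, hw, rfl⟩ : g ∈ N * (W : Set G) := hN.2 ▸ Set.mem_univ g
    exact mul_mem_mul (mem_filter.2 ⟨by simpa using mul_mem_mul hg (inv_mem_inv hw), hx⟩) hw
  _ ≤ #{x ∈ X * W⁻¹ | x ∈ N} * #W := card_mul_le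
  _ ≤ (#{x ∈ X | x ∈ N} + #((X * W⁻¹) \ X)) * #W := by
    gcongr; exact card_filter_le_card_filter_add_card_sdiff _ _ _

theorem one_div_card_sub_le_density (hN : IsNet U (W : Set G) N) {X : Finset G}
    (hX : X.Nonempty) :
    1 / (#W : ℝ) - #((X * W⁻¹) \ X) / #X ≤ #{x ∈ X | x ∈ N} / #X := by
  rw [sub_le_iff_le_add, ← add_div]
  refine div_le_of_le_mul₀ (by positivity) (by positivity) ?_
  rw [div_mul_eq_mul_div, one_le_div (by positivity)]
  exact_mod_cast hN.card_le_card_filter_add_mul_card X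

theorem density_le_div_card (hN : IsNet (U : Set G) W N) (hU : U.Nonempty) {X : Finset G}
    (hX : X.Nonempty) :
    (#{x ∈ X | x ∈ N} : ℝ) / #X ≤ (1 + #((X * U) \ X) / #X) / #U := by
  rw [le_div_iff₀ (by positivity), div_mul_eq_mul_div, div_le_iff₀ (by positivity), add_mul,
    one_mul, div_mul_cancel₀ _ (by positivity)]
  exact_mod_cast hN.card_filter_mul_card_le X

end IsNet

theorem net_density_bounds_general {G : Type*} [Group G] [DecidableEq G]
    (X : ℕ → Finset G) (hX : IsFolner X)
    (U W : Finset G) (hU : U.Nonempty)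
    (N : Set G) (hN : IsNet (U : Set G) (W : Set G) N) :
    (1 : ℝ) / W.card ≤ liminf (fun n => ((N ∩ (X n : Set G)).ncard : ℝ) / (X n).card) atTop ∧
    limsup (fun n => ((N ∩ (X n : Set G)).ncard : ℝ) / (X n).card) atTop ≤ (1 : ℝ) / U.card := by
  classical
  obtain ⟨hexh, hfol⟩ := hX
  have hncard (n : ℕ) : (N ∩ (X n : Set G)).ncard = #{x ∈ X n | x ∈ N} := by
    rw [← Set.ncard_coe_finset, coe_filter, Set.inter_comm]; rfl
  simp only [hncard]
  have hnonempty : ∀ᶠ n in atTop, (X n).Nonempty :=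
    (hexh.eventually_mem_s15 1).mono fun n h => ⟨1, h⟩
  constructor
  · refine le_liminf_of_eventually_le_of_tendsto ?_
      (hnonempty.mono fun n hn => hN.one_div_card_sub_le_density hn) ?_
    · simpa using (hfol W).const_sub (1 / (#W : ℝ))
    · exact isBoundedUnder_of
        ⟨1, fun n => div_le_one_of_le₀ (mod_cast card_filter_le _ _) (by positivity)⟩
  · refine limsup_le_of_eventually_le_of_tendsto ?_
      (hnonempty.mono fun n hn => hN.density_le_div_card hU hn) ?_
    · simpa using ((hfol U⁻¹).const_add 1).div_const (#U : ℝ)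
    · exact isBoundedUnder_of ⟨0, fun n => by positivity⟩

/-- The lower density of a `(U,W)`-net w.r.t. an amenable exhaustive sequence is
at least `1/|W|`, and its upper density is at most `1/|U|`. -/
theorem net_density_bounds {G : Type*} [Group G] [DecidableEq G]
    (X : ℕ → Finset G) (hX : IsFolner X)
    (U W : Finset G) (hU : U.Nonempty) (hW : W.Nonempty)
    (N : Set G) (hN : IsNet (U : Set G) (W : Set G) N) :
    (1 : ℝ) / W.card ≤ liminf (fun n => ((N ∩ (X n : Set G)).ncard : ℝ) / (X n).card) atTop ∧
    limsup (fun n => ((N ∩ (X n : Set G)).ncard : ℝ) / (X n).card) atTop ≤ (1 : ℝ) / U.card :=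
  net_density_bounds_general X hX U W hU N hN
end

section
/- Let G be a finitely generated group and {X_n} an exhaustive sequence containing an amenable subsequence. If a cellular automaton A over G is Besicovitch surjective with respect to {X_n}, then A is surjective. Equivalently: if A has a Garden of Eden pattern, then there exists a configuration c such that d_{B,{X_n}}(c, F_A(c')) > 0 for every configuration c'. -/
open Filter Pointwise

def caMap {G Q : Type*} [Group G] (N : Finset G) (f : (N → Q) → Q) :
    (G → Q) → G → Q :=
  fun c g => f (fun x => c (g * x.1))

section Aux

variable {G Q : Type*} [Group G] [DecidableEq G]

/-- cards of symmetric differences agree when cards agree -/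
lemma card_sdiff_comm_aux {A B : Finset G} (h : A.card = B.card) :
    (A \ B).card = (B \ A).card := by
  have h1 := Finset.card_sdiff_add_card_inter A B
  have h2 := Finset.card_sdiff_add_card_inter B A
  rw [Finset.inter_comm] at h2
  omega

lemma caMap_shift (N : Finset G) (f : (N → Q) → Q) (c : G → Q) (g x : G) :
    caMap N f (fun h => c (g * h)) x = caMap N f c (g * x) := by
  unfold caMap
  congr 1
  funext y
  rw [mul_assoc]

/-- Compactness: if every finite restriction of `c₀` is realized, `c₀` is realized. -/
lemma exists_preimage_of_finite_approx [Fintype Q] (X : ℕ → Finset G)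
    (hX : IsExhaustive X) (N : Finset G) (f : (N → Q) → Q) (c₀ : G → Q)
    (h : ∀ m, ∃ c', ∀ x ∈ X m, caMap N f c' x = c₀ x) :
    ∃ c', caMap N f c' = c₀ := by
  choose cs hcs using h
  have hmono : Monotone X := monotone_nat_of_le_succ (fun n => hX.1 n)
  let U : Ultrafilter ℕ := Ultrafilter.of atTop
  have hU : (U : Filter ℕ) ≤ atTop := Ultrafilter.of_le _
  have key : ∀ g : G, ∃ q : Q, {m | cs m g = q} ∈ U := by
    intro g
    by_contra hq
    push_neg at hq
    have hcompl : ∀ q : Q, {m | cs m g = q}ᶜ ∈ U :=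
      fun q => Ultrafilter.compl_mem_iff_notMem.2 (hq q)
    have h2 : (⋂ q : Q, {m | cs m g = q}ᶜ) ∈ U := Filter.iInter_mem.2 hcompl
    have h3 : (⋂ q : Q, {m | cs m g = q}ᶜ) = ∅ := by
      ext m
      simp
    rw [h3] at h2
    exact Filter.empty_notMem _ h2
  choose c' hc' using key
  refine ⟨c', ?_⟩
  funext g
  have hgX : {m | g ∈ X m} ∈ U := by
    obtain ⟨n₀, hn₀⟩ := hX.2 g
    exact hU (mem_of_superset (Ici_mem_atTop n₀) (fun m hm => hmono hm hn₀))
  have hbig : ({m | g ∈ X m} ∩ ⋂ x : N, {m | cs m (g * x.1) = c' (g * x.1)}) ∈ U :=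
    Filter.inter_mem hgX (Filter.iInter_mem.2 (fun x => hc' _))
  obtain ⟨m, hm1, hm2⟩ := Filter.nonempty_of_mem hbig
  have hx : ∀ x : N, c' (g * x.1) = cs m (g * x.1) := by
    intro x
    exact (Set.mem_iInter.1 hm2 x).symm
  calc caMap N f c' g = f (fun x => c' (g * x.1)) := rfl
    _ = f (fun x => cs m (g * x.1)) := by
        congr 1
        funext x
        exact hx x
    _ = caMap N f (cs m) g := rfl
    _ = c₀ g := hcs m g hm1

/-- A maximal packing of translates of `E`, covering `G` at scale `E * E⁻¹`. -/
lemma exists_maximal_packing (E : Finset G) (hE : E.Nonempty) :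
    ∃ S : Set G,
      (∀ s ∈ S, ∀ t ∈ S, ∀ x ∈ E, ∀ y ∈ E, s * x = t * y → s = t) ∧
      (∀ g : G, ∃ s ∈ S, ∃ d ∈ E * E⁻¹, g = s * d) := by
  set P : Set (Set G) :=
    {S | ∀ s ∈ S, ∀ t ∈ S, s ≠ t → ∀ x ∈ E, ∀ y ∈ E, s * x ≠ t * y} with hP
  obtain ⟨S, hSmax⟩ := zorn_subset P (by
    intro c hc hchain
    refine ⟨⋃₀ c, ?_, fun s hs => Set.subset_sUnion_of_mem hs⟩
    intro s hs t ht hst x hx y hy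
    obtain ⟨A, hA, hsA⟩ := hs
    obtain ⟨B, hB, htB⟩ := ht
    rcases hchain.total hA hB with hAB | hBA
    · exact hc hB s (hAB hsA) t htB hst x hx y hy
    · exact hc hA s hsA t (hBA htB) hst x hx y hy)
  have hSP : S ∈ P := hSmax.1
  refine ⟨S, ?_, ?_⟩
  · intro s hs t ht x hx y hy hxy
    by_contra hne
    exact hSP s hs t ht hne x hx y hy hxy
  · intro g
    by_cases hgS : g ∈ S
    · obtain ⟨x, hx⟩ := hE
      exact ⟨g, hgS, x * x⁻¹, Finset.mul_mem_mul hx (Finset.inv_mem_inv hx), by group⟩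
    by_cases hcol : ∃ s ∈ S, ∃ x ∈ E, ∃ y ∈ E, g * x = s * y
    · obtain ⟨s, hs, x, hx, y, hy, hxy⟩ := hcol
      refine ⟨s, hs, y * x⁻¹, Finset.mul_mem_mul hy (Finset.inv_mem_inv hx), ?_⟩
      rw [← mul_assoc, ← hxy]
      group
    · push_neg at hcol
      exfalso
      apply hgS
      have hins : insert g S ∈ P := by
        intro s hs t ht hst x hx y hy
        rcases Set.mem_insert_iff.1 hs with hsg | hsS
        · rcases Set.mem_insert_iff.1 ht with htg | htS
          · exact absurd (hsg.trans htg.symm) hst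
          · rw [hsg]
            exact hcol t htS x hx y hy
        · rcases Set.mem_insert_iff.1 ht with htg | htS
          · intro heq
            rw [htg] at heq
            exact hcol s hsS y hy x hx heq.symm
          · exact hSP s hsS t htS hst x hx y hy
      exact hSmax.2 hins (Set.subset_insert g S) (Set.mem_insert g S)

lemma half_div_aux (d : ℝ) (hd : 0 < d) : 1 / (2 * d) = 1 / d - 1 / (2 * d) := by
  field_simp
  ring

end Aux

/-- If a CA is Besicovitch surjective w.r.t. an exhaustive sequence containing an
amenable subsequence, then it is surjective. -/
theorem besicovitch_surjective_implies_surjective {G Q : Type*} [Group G]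
    [DecidableEq G] [Fintype Q] (hQ : 2 ≤ Fintype.card Q)
    (X : ℕ → Finset G) (hX : IsExhaustive X)
    (hsub : ∃ φ : ℕ → ℕ, StrictMono φ ∧ IsFolner (fun n => X (φ n)))
    (N : Finset G) (hN : N.Nonempty) (f : (N → Q) → Q)
    (hBsurj : ∀ c : G → Q, ∃ c' : G → Q, besDist X c (caMap N f c') = 0) :
    Function.Surjective (caMap N f) := by
  classical
  have hQne : Nonempty Q := Fintype.card_pos_iff.1 (by omega)
  obtain ⟨φ, hφ, hφX, hFol⟩ := hsub
  by_contra hsurj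
  rw [Function.Surjective] at hsurj
  push_neg at hsurj
  obtain ⟨c₀, hc₀⟩ := hsurj
  -- Garden of Eden pattern on E := X m
  have hgoe : ∃ m, ∀ c', ∃ x ∈ X m, caMap N f c' x ≠ c₀ x := by
    by_contra hc
    push_neg at hc
    obtain ⟨c', hc'⟩ := exists_preimage_of_finite_approx X hX N f c₀ hc
    exact hc₀ c' hc'
  obtain ⟨m, hm⟩ := hgoe
  set E : Finset G := X m with hEdef
  have hE : E.Nonempty := by
    obtain ⟨x, hx, _⟩ := hm (fun _ => Classical.arbitrary Q)
    exact ⟨x, hx⟩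
  -- anywhere version of GoE
  have hm' : ∀ c' : G → Q, ∀ g : G, ∃ x ∈ E, caMap N f c' (g * x) ≠ c₀ x := by
    intro c' g
    obtain ⟨x, hx, hne⟩ := hm (fun h => c' (g * h))
    refine ⟨x, hx, ?_⟩
    rw [← caMap_shift N f c' g x]
    exact hne
  set D : Finset G := E * E⁻¹ with hDdef
  have hD : D.Nonempty := hE.mul (hE.inv)
  have hDpos : (0 : ℝ) < D.card := by
    exact_mod_cast Finset.card_pos.2 hD
  obtain ⟨S, hSdisj, hScov⟩ := exists_maximal_packing E hE
  -- the configuration c with GoE patterns planted on all translates s • E, s ∈ S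
  set c : G → Q := fun g =>
    if h : ∃ s ∈ S, s⁻¹ * g ∈ E then c₀ ((h.choose)⁻¹ * g)
    else Classical.arbitrary Q with hcdef
  have hcval : ∀ s ∈ S, ∀ x ∈ E, c (s * x) = c₀ x := by
    intro s hs x hx
    have hex : ∃ t ∈ S, t⁻¹ * (s * x) ∈ E := ⟨s, hs, by simpa using hx⟩
    rw [hcdef]
    simp only [dif_pos hex]
    obtain ⟨htS, htE⟩ := hex.choose_spec
    have hts : hex.choose = s := by
      have := hSdisj hex.choose htS s hs (hex.choose⁻¹ * (s * x)) htE x hx (by group)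
      exact this
    rw [hts]
    congr 1
    group
  obtain ⟨c', hc'⟩ := hBsurj c
  -- the difference sequence
  set a : ℕ → ℝ := fun k => (hamDist (↑(X k)) c (caMap N f c') : ℝ) / (X k).card
    with hadef
  have ha0 : ∀ k, 0 ≤ a k := fun k => div_nonneg (Nat.cast_nonneg _) (Nat.cast_nonneg _)
  have ha1 : ∀ k, a k ≤ 1 := by
    intro k
    rcases Nat.eq_zero_or_pos (X k).card with h0 | hpos
    · simp [hadef, h0]
    · rw [hadef, div_le_one (by exact_mod_cast hpos)]
      have : {x ∈ (↑(X k) : Set G) | c x ≠ caMap N f c' x}.ncard ≤ (X k).card := by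
        rw [← Set.ncard_coe_finset (X k)]
        exact Set.ncard_le_ncard (fun x hx => hx.1) (Finset.finite_toSet _)
      exact_mod_cast this
  -- main counting estimate: along the Følner subsequence, eventually a (φ n) ≥ 1/(2 D.card)
  have hmain : ∀ k : ℕ, (X k).card ≠ 0 →
      (1 : ℝ) / D.card -
        ((((X k * D⁻¹) \ X k).card : ℝ) / (X k).card +
          ∑ e ∈ E, (((X k * ({e} : Finset G)⁻¹) \ X k).card : ℝ) / (X k).card)
      ≤ a k := by
    intro k hk
    set Y : Finset G := X k with hYdef
    have hYpos : (0 : ℝ) < Y.card := by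
      have : 0 < Y.card := Nat.pos_of_ne_zero hk
      exact_mod_cast this
    set T : Finset G := (Y * D⁻¹).filter (fun s => s ∈ S) with hTdef
    -- (a) covering estimate : Y.card ≤ T.card * D.card
    have hcov : Y.card ≤ T.card * D.card := by
      have hsub : Y ⊆ T.biUnion (fun s => D.image (fun d => s * d)) := by
        intro y hy
        obtain ⟨s, hs, d, hd, rfl⟩ := hScov y
        have hsT : s ∈ T := by
          rw [hTdef]
          refine Finset.mem_filter.2 ⟨?_, hs⟩
          have : s = s * d * d⁻¹ := by group
          rw [this]
          exact Finset.mul_mem_mul hy (Finset.inv_mem_inv hd)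
        exact Finset.mem_biUnion.2 ⟨s, hsT, Finset.mem_image.2 ⟨d, hd, rfl⟩⟩
      calc Y.card ≤ (T.biUnion (fun s => D.image (fun d => s * d))).card :=
            Finset.card_le_card hsub
        _ ≤ ∑ s ∈ T, (D.image (fun d => s * d)).card := Finset.card_biUnion_le
        _ ≤ ∑ s ∈ T, D.card := Finset.sum_le_sum (fun s _ => Finset.card_image_le)
        _ = T.card * D.card := by rw [Finset.sum_const, smul_eq_mul]
    -- (b) boundary estimate
    set Good : Finset G := T.filter (fun s => ∀ x ∈ E, s * x ∈ Y) with hGdef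
    have hbound : (T \ Good).card ≤
        ((Y * D⁻¹) \ Y).card + ∑ e ∈ E, ((Y * ({e} : Finset G)⁻¹) \ Y).card := by
      have hsub : T \ Good ⊆
          ((Y * D⁻¹) \ Y) ∪ E.biUnion (fun e => Y \ (Y * ({e} : Finset G)⁻¹)) := by
        intro s hs
        obtain ⟨hsT, hsG⟩ := Finset.mem_sdiff.1 hs
        have hsYD : s ∈ Y * D⁻¹ := (Finset.mem_filter.1 hsT).1
        by_cases hsY : s ∈ Y
        · refine Finset.mem_union.2 (Or.inr ?_)
          rw [hGdef] at hsG
          simp only [Finset.mem_filter, hsT, true_and, not_forall] at hsG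
          obtain ⟨e, he, hnot⟩ := hsG
          refine Finset.mem_biUnion.2 ⟨e, he, Finset.mem_sdiff.2 ⟨hsY, ?_⟩⟩
          intro habs
          obtain ⟨y, hy, z, hz, hyz⟩ := Finset.mem_mul.1 habs
          rw [Finset.mem_inv] at hz
          obtain ⟨w, hw, rfl⟩ := hz
          rw [Finset.mem_singleton] at hw
          rw [hw] at hyz
          apply hnot
          have : s * e = y := by rw [← hyz]; group
          rw [this]
          exact hy
        · exact Finset.mem_union.2 (Or.inl (Finset.mem_sdiff.2 ⟨hsYD, hsY⟩))
      calc (T \ Good).card ≤ _ := Finset.card_le_card hsub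
        _ ≤ ((Y * D⁻¹) \ Y).card +
            (E.biUnion (fun e => Y \ (Y * ({e} : Finset G)⁻¹))).card :=
            Finset.card_union_le _ _
        _ ≤ ((Y * D⁻¹) \ Y).card + ∑ e ∈ E, (Y \ (Y * ({e} : Finset G)⁻¹)).card :=
            by gcongr; exact Finset.card_biUnion_le
        _ = ((Y * D⁻¹) \ Y).card + ∑ e ∈ E, ((Y * ({e} : Finset G)⁻¹) \ Y).card := by
            congr 1
            refine Finset.sum_congr rfl (fun e _ => ?_)
            refine card_sdiff_comm_aux ?_
            have : Y * ({e} : Finset G)⁻¹ = Y.image (fun y => y * e⁻¹) := by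
              ext z
              simp only [Finset.mem_mul, Finset.mem_inv, Finset.mem_singleton,
                Finset.mem_image]
              constructor
              · rintro ⟨y, hy, w, ⟨v, hv, rfl⟩, rfl⟩
                exact ⟨y, hy, by rw [hv]⟩
              · rintro ⟨y, hy, rfl⟩
                exact ⟨y, hy, e⁻¹, ⟨e, rfl, rfl⟩, rfl⟩
            rw [this, Finset.card_image_of_injective _ (mul_left_injective e⁻¹)]
    -- (c) each good s yields a difference point in s • E ⊆ Y
    have hdiff : (Good.card : ℝ) ≤ hamDist (↑Y) c (caMap N f c') := by
      have hpick : ∀ s ∈ Good, ∃ x ∈ E, caMap N f c' (s * x) ≠ c₀ x :=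
        fun s _ => hm' c' s
      choose xs hxsE hxsne using hpick
      set ΔF : Finset G := Y.filter (fun x => c x ≠ caMap N f c' x) with hΔdef
      have hham : hamDist (↑Y) c (caMap N f c') = ΔF.card := by
        rw [hamDist, ← Set.ncard_coe_finset ΔF]
        congr 1
        ext x
        simp [hΔdef, Set.mem_sep_iff]
      have himg : ∀ s (hs : s ∈ Good), s * xs s hs ∈ ΔF := by
        intro s hs
        have hsT : s ∈ T := (Finset.mem_filter.1 hs).1
        have hsS : s ∈ S := (Finset.mem_filter.1 hsT).2
        have hsY : s * xs s hs ∈ Y :=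
          (Finset.mem_filter.1 hs).2 (xs s hs) (hxsE s hs)
        refine Finset.mem_filter.2 ⟨hsY, ?_⟩
        rw [hcval s hsS (xs s hs) (hxsE s hs)]
        exact fun h => hxsne s hs h.symm
      -- injectivity
      have hinj : ∀ s (hs : s ∈ Good), ∀ t (ht : t ∈ Good),
          s * xs s hs = t * xs t ht → s = t := by
        intro s hs t ht heq
        have hsS : s ∈ S := (Finset.mem_filter.1 ((Finset.mem_filter.1 hs).1)).2
        have htS : t ∈ S := (Finset.mem_filter.1 ((Finset.mem_filter.1 ht).1)).2
        exact hSdisj s hsS t htS (xs s hs) (hxsE s hs) (xs t ht) (hxsE t ht) heq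
      have hcard : Good.card ≤ ΔF.card := by
        rw [← Finset.card_attach (s := Good)]
        refine Finset.card_le_card_of_injOn (fun s => s.1 * xs s.1 s.2)
          (fun s _ => himg s.1 s.2) ?_
        intro s _ t _ heq
        exact Subtype.ext (hinj s.1 s.2 t.1 t.2 heq)
      rw [hham]
      exact_mod_cast hcard
    -- combine
    have hTcard : (Y.card : ℝ) / D.card ≤ T.card := by
      rw [div_le_iff₀ hDpos]
      exact_mod_cast hcov
    have hGoodT : (T.card : ℝ) ≤ Good.card + (T \ Good).card := by
      have h : T.card = Good.card + (T \ Good).card := by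
        have hGT : Good ⊆ T := Finset.filter_subset _ _
        rw [add_comm, Finset.card_sdiff_add_card_eq_card hGT]
      exact_mod_cast le_of_eq h
    have hkey : (Y.card : ℝ) / D.card -
        ((((Y * D⁻¹) \ Y).card : ℝ) + ∑ e ∈ E, (((Y * ({e} : Finset G)⁻¹) \ Y).card : ℝ))
        ≤ hamDist (↑Y) c (caMap N f c') := by
      have hb : ((T \ Good).card : ℝ) ≤
          ((((Y * D⁻¹) \ Y).card : ℝ) + ∑ e ∈ E, (((Y * ({e} : Finset G)⁻¹) \ Y).card : ℝ)) := by
        exact_mod_cast hbound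
      linarith [hTcard, hGoodT, hb, hdiff]
    -- divide by Y.card
    rw [hadef]
    have hY0 : (Y.card : ℝ) ≠ 0 := ne_of_gt hYpos
    have h1D : ((Y.card : ℝ) / D.card) / Y.card = 1 / D.card := by
      rw [div_div, mul_comm, ← div_div, div_self hY0]
    rw [← h1D, ← Finset.sum_div, ← add_div, ← sub_div]
    exact div_le_div_of_nonneg_right hkey hYpos.le
  -- Følner: boundary terms tend to 0 along the subsequence
  have hmono : Monotone X := monotone_nat_of_le_succ (fun n => hX.1 n)
  set δ : ℝ := 1 / (2 * D.card) with hδdef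
  have hδpos : 0 < δ := by
    rw [hδdef]
    have h2D : (0 : ℝ) < 2 * D.card := by linarith
    exact one_div_pos.2 h2D
  have htend : Tendsto (fun n =>
      (((X (φ n) * D⁻¹) \ X (φ n)).card : ℝ) / (X (φ n)).card +
        ∑ e ∈ E, (((X (φ n) * ({e} : Finset G)⁻¹) \ X (φ n)).card : ℝ) / (X (φ n)).card)
      atTop (nhds 0) := by
    have h1 := hFol D
    have h2 : Tendsto (fun n => ∑ e ∈ E,
        (((X (φ n) * ({e} : Finset G)⁻¹) \ X (φ n)).card : ℝ) / (X (φ n)).card)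
        atTop (nhds 0) := by
      have := tendsto_finset_sum E (fun e _ => hFol ({e} : Finset G))
      simpa using this
    simpa using h1.add h2
  have hev1 : ∀ᶠ n in atTop, (X (φ n)).card ≠ 0 := by
    obtain ⟨g, hg⟩ := hE
    filter_upwards [eventually_ge_atTop m] with n hn
    have hg2 : g ∈ X (φ n) := hmono (le_trans hn hφ.le_apply) hg
    exact Finset.card_ne_zero_of_mem hg2
  have hev2 := htend.eventually_lt_const hδpos
  have hevδ : ∀ᶠ n in atTop, δ ≤ a (φ n) := by
    filter_upwards [hev1, hev2] with n h1 h2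
    have hkey := hmain (φ n) h1
    have hδeq : δ = 1 / (D.card : ℝ) - 1 / (2 * D.card) := by
      rw [hδdef]
      exact half_div_aux _ hDpos
    rw [hδeq]
    linarith [hkey, h2, hδeq]
  -- limsup comparison
  have hbdd : IsBoundedUnder (· ≤ ·) atTop (fun n => a (φ n)) :=
    isBoundedUnder_of ⟨1, fun n => ha1 _⟩
  have h1 : δ ≤ limsup (fun n => a (φ n)) atTop :=
    le_limsup_of_frequently_le hevδ.frequently hbdd
  have h2 : limsup (fun n => a (φ n)) atTop ≤ limsup a atTop := by
    have hφt : Tendsto φ atTop atTop := hφ.tendsto_atTop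
    have heq : (fun n => a (φ n)) = a ∘ φ := rfl
    rw [heq, limsup_comp]
    have hco : IsCoboundedUnder (· ≤ ·) (map φ atTop) a := by
      have hb : IsBoundedUnder (· ≥ ·) (map φ atTop) a :=
        isBoundedUnder_of ⟨0, fun n => ha0 _⟩
      exact hb.isCoboundedUnder_le
    exact limsup_le_limsup_of_le hφt hco (isBoundedUnder_of ⟨1, fun n => ha1 _⟩)
  have hzero : limsup a atTop = 0 := hc'
  rw [hzero] at h2
  linarith [h1.trans h2]
end
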